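/- Fix T ∈ (0,∞), let μ be a finite Borel measure on ℝ with support contained in [0,T], and let t ∈ (0,T) satisfy μ((t,T]) > 0. For x ∈ ℝ with x ≠ 0 define f(t,x) := (∫_{(t,T]} (r−t)^{−1}·√(r/(r−t))·exp(−r x²/(2t(r−t))) dμ(r)) / (∫_{(t,T]} √(r/(r−t))·exp(−r x²/(2t(r−t))) dμ(r)). Then x ↦ f(t,x) is nonincreasing on (0,∞) and nondecreasing on (−∞,0): for all x₁, x₂ with 0 < x₁ < x₂ one has f(t,x₂) ≤ f(t,x₁), and for all x₁ < x₂ < 0 one has f(t,x₁) ≤ f(t,x₂). -/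
import Mathlib

open MeasureTheory Set Real

/-- The weight function in the numerator/denominator integrands. -/
noncomputable def Wfun (t a r : ℝ) : ℝ :=
  Real.sqrt (r / (r - t)) * Real.exp (-(r * a) / (2 * t * (r - t)))

/-- The numerator integrand. -/
noncomputable def Gfun (t a r : ℝ) : ℝ := (r - t)⁻¹ * Wfun t a r

lemma measurable_Wfun (t a : ℝ) : Measurable (Wfun t a) := by
  unfold Wfun; fun_prop

lemma measurable_Gfun (t a : ℝ) : Measurable (Gfun t a) := by
  unfold Gfun Wfun; fun_prop

lemma Wfun_nonneg (t a r : ℝ) : 0 ≤ Wfun t a r :=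
  mul_nonneg (Real.sqrt_nonneg _) (Real.exp_pos _).le

/-- basic bound : `u⁻¹ * exp (-(c/u)) ≤ c⁻¹` for positive `u, c`. -/
lemma inv_mul_exp_le {u c : ℝ} (hu : 0 < u) (hc : 0 < c) :
    u⁻¹ * Real.exp (-(c / u)) ≤ c⁻¹ := by
  have hcu : 0 < c / u := div_pos hc hu
  have h1 : c / u ≤ Real.exp (c / u) := by
    have := Real.add_one_le_exp (c / u); linarith
  have h2 : Real.exp (-(c / u)) ≤ u / c := by
    rw [Real.exp_neg]
    calc (Real.exp (c / u))⁻¹ ≤ (c / u)⁻¹ := by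
          apply inv_anti₀ hcu h1
      _ = u / c := by rw [inv_div]
  calc u⁻¹ * Real.exp (-(c / u)) ≤ u⁻¹ * (u / c) :=
        mul_le_mul_of_nonneg_left h2 (by positivity)
    _ = c⁻¹ := by field_simp

lemma sqrt_factor_bound {T t r : ℝ} (ht : 0 < t) (hr : r ∈ Set.Ioc t T) :
    Real.sqrt (r / (r - t)) ≤ Real.sqrt T * (1 + (r - t)⁻¹) := by
  have hu : 0 < r - t := sub_pos.mpr hr.1
  have hT : 0 < T := lt_of_le_of_lt' hr.2 (by linarith [hr.1])
  have hv : (0:ℝ) ≤ (r - t)⁻¹ := by positivity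
  have hru : r * (r - t)⁻¹ ≤ T * (r - t)⁻¹ :=
    mul_le_mul_of_nonneg_right hr.2 hv
  have h1 : r / (r - t) ≤ T * (1 + (r - t)⁻¹) ^ 2 := by
    rw [div_eq_mul_inv]
    nlinarith [mul_nonneg hT.le hv, mul_nonneg (mul_nonneg hT.le hv) hv]
  calc Real.sqrt (r / (r - t)) ≤ Real.sqrt (T * (1 + (r - t)⁻¹) ^ 2) :=
        Real.sqrt_le_sqrt h1
    _ = Real.sqrt T * (1 + (r - t)⁻¹) := by
        rw [Real.sqrt_mul hT.le, Real.sqrt_sq (by linarith)]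

lemma exp_factor_bound {T t r : ℝ} (ht : 0 < t) (hr : r ∈ Set.Ioc t T)
    {a : ℝ} (ha : 0 < a) :
    Real.exp (-(r * a) / (2 * t * (r - t))) ≤ Real.exp (-(a / 2 / (r - t))) := by
  have hu : 0 < r - t := sub_pos.mpr hr.1
  apply Real.exp_le_exp.mpr
  rw [neg_div, neg_le_neg_iff]
  rw [div_le_div_iff₀ (by positivity) (by positivity)]
  nlinarith [mul_nonneg (mul_nonneg ha.le hu.le) (sub_nonneg.mpr hr.1.le)]

lemma Wfun_bound {T t r : ℝ} (ht : 0 < t) (hr : r ∈ Set.Ioc t T)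
    {a : ℝ} (ha : 0 < a) :
    Wfun t a r ≤ Real.sqrt T * (1 + (a / 2)⁻¹) := by
  have hu : 0 < r - t := sub_pos.mpr hr.1
  have hru : (0:ℝ) ≤ (r - t)⁻¹ := by positivity
  have s1 := sqrt_factor_bound ht hr
  have e1 := exp_factor_bound ht hr ha
  have e2 : Real.exp (-(a / 2 / (r - t))) ≤ 1 := by
    rw [← Real.exp_zero]
    exact Real.exp_le_exp.mpr (neg_nonpos.mpr (by positivity))
  have e3 : (r - t)⁻¹ * Real.exp (-(a / 2 / (r - t))) ≤ (a / 2)⁻¹ :=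
    inv_mul_exp_le hu (by positivity)
  calc Wfun t a r ≤ (Real.sqrt T * (1 + (r - t)⁻¹)) * Real.exp (-(a / 2 / (r - t))) := by
        exact mul_le_mul s1 e1 (Real.exp_pos _).le
          (mul_nonneg (Real.sqrt_nonneg _) (by linarith))
    _ = Real.sqrt T * (Real.exp (-(a / 2 / (r - t)))
          + (r - t)⁻¹ * Real.exp (-(a / 2 / (r - t)))) := by ring
    _ ≤ Real.sqrt T * (1 + (a / 2)⁻¹) :=
        mul_le_mul_of_nonneg_left (add_le_add e2 e3) (Real.sqrt_nonneg T)

lemma Gfun_bound {T t r : ℝ} (ht : 0 < t) (hr : r ∈ Set.Ioc t T)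
    {a : ℝ} (ha : 0 < a) :
    Gfun t a r ≤ Real.sqrt T * ((a / 2)⁻¹ + (a / 4)⁻¹ * (a / 4)⁻¹) := by
  have hu : 0 < r - t := sub_pos.mpr hr.1
  have hru : (0:ℝ) ≤ (r - t)⁻¹ := by positivity
  have s1 := sqrt_factor_bound ht hr
  have e1 := exp_factor_bound ht hr ha
  have key1 : (r - t)⁻¹ * Real.exp (-(a / 2 / (r - t))) ≤ (a / 2)⁻¹ :=
    inv_mul_exp_le hu (by positivity)
  have key2 : (r - t)⁻¹ * ((r - t)⁻¹ * Real.exp (-(a / 2 / (r - t))))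
      ≤ (a / 4)⁻¹ * (a / 4)⁻¹ := by
    have hsplit : Real.exp (-(a / 2 / (r - t)))
        = Real.exp (-(a / 4 / (r - t))) * Real.exp (-(a / 4 / (r - t))) := by
      rw [← Real.exp_add]; congr 1; ring
    have k : (r - t)⁻¹ * Real.exp (-(a / 4 / (r - t))) ≤ (a / 4)⁻¹ :=
      inv_mul_exp_le hu (by positivity)
    have knn : (0:ℝ) ≤ (r - t)⁻¹ * Real.exp (-(a / 4 / (r - t))) :=
      mul_nonneg hru (Real.exp_pos _).le
    calc (r - t)⁻¹ * ((r - t)⁻¹ * Real.exp (-(a / 2 / (r - t))))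
        = ((r - t)⁻¹ * Real.exp (-(a / 4 / (r - t))))
          * ((r - t)⁻¹ * Real.exp (-(a / 4 / (r - t)))) := by rw [hsplit]; ring
      _ ≤ (a / 4)⁻¹ * (a / 4)⁻¹ := mul_le_mul k k knn (by positivity)
  calc Gfun t a r
      ≤ (r - t)⁻¹ * ((Real.sqrt T * (1 + (r - t)⁻¹)) * Real.exp (-(a / 2 / (r - t)))) := by
        unfold Gfun
        exact mul_le_mul_of_nonneg_left
          (mul_le_mul s1 e1 (Real.exp_pos _).le
            (mul_nonneg (Real.sqrt_nonneg _) (by linarith))) hru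
    _ = Real.sqrt T * ((r - t)⁻¹ * Real.exp (-(a / 2 / (r - t)))
          + (r - t)⁻¹ * ((r - t)⁻¹ * Real.exp (-(a / 2 / (r - t))))) := by ring
    _ ≤ Real.sqrt T * ((a / 2)⁻¹ + (a / 4)⁻¹ * (a / 4)⁻¹) :=
        mul_le_mul_of_nonneg_left (add_le_add key1 key2) (Real.sqrt_nonneg T)


/-- Pointwise FKG-type sign condition. -/
lemma pointwise_sign {T t : ℝ} (ht : 0 < t) {a₁ a₂ : ℝ} (h12 : a₁ ≤ a₂)
    {r s : ℝ} (hr : r ∈ Set.Ioc t T) (hs : s ∈ Set.Ioc t T) :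
    Gfun t a₂ r * Wfun t a₁ s - Gfun t a₁ r * Wfun t a₂ s
      + Wfun t a₁ r * Gfun t a₂ s - Wfun t a₂ r * Gfun t a₁ s ≤ 0 := by
  have hu : 0 < r - t := sub_pos.mpr hr.1
  have hv : 0 < s - t := sub_pos.mpr hs.1
  have hiden : Gfun t a₂ r * Wfun t a₁ s - Gfun t a₁ r * Wfun t a₂ s
      + Wfun t a₁ r * Gfun t a₂ s - Wfun t a₂ r * Gfun t a₁ s
      = ((r - t)⁻¹ - (s - t)⁻¹)
        * (Wfun t a₂ r * Wfun t a₁ s - Wfun t a₁ r * Wfun t a₂ s) := by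
    unfold Gfun; ring
  rw [hiden]
  have hWE : ∀ a x, Wfun t a x
      = Real.sqrt (x / (x - t)) * Real.exp (-(a * (x / (2 * t * (x - t))))) := by
    intro a x
    unfold Wfun
    rw [show -(x * a) / (2 * t * (x - t)) = -(a * (x / (2 * t * (x - t)))) by ring]
  simp only [hWE]
  have ht0 : t ≠ 0 := ht.ne'
  have hu0 : r - t ≠ 0 := hu.ne'
  have hv0 : s - t ≠ 0 := hv.ne'
  have hq : r / (2 * t * (r - t)) - s / (2 * t * (s - t))
      = ((r - t)⁻¹ - (s - t)⁻¹) / 2 := by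
    field_simp
    ring
  have Br0 : (0:ℝ) ≤ Real.sqrt (r / (r - t)) := Real.sqrt_nonneg _
  have Bs0 : (0:ℝ) ≤ Real.sqrt (s / (s - t)) := Real.sqrt_nonneg _
  rcases le_total ((s - t)⁻¹) ((r - t)⁻¹) with hcase | hcase
  · apply mul_nonpos_iff.mpr
    left
    refine ⟨by linarith, ?_⟩
    have hqle : s / (2 * t * (s - t)) ≤ r / (2 * t * (r - t)) := by linarith
    have hE : Real.exp (-(a₂ * (r / (2 * t * (r - t)))))
          * Real.exp (-(a₁ * (s / (2 * t * (s - t)))))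
        ≤ Real.exp (-(a₁ * (r / (2 * t * (r - t)))))
          * Real.exp (-(a₂ * (s / (2 * t * (s - t))))) := by
      rw [← Real.exp_add, ← Real.exp_add]
      apply Real.exp_le_exp.mpr
      nlinarith [mul_nonneg (sub_nonneg.mpr h12) (sub_nonneg.mpr hqle)]
    nlinarith [mul_le_mul_of_nonneg_left hE (mul_nonneg Br0 Bs0)]
  · apply mul_nonpos_iff.mpr
    right
    refine ⟨by linarith, ?_⟩
    have hqle : r / (2 * t * (r - t)) ≤ s / (2 * t * (s - t)) := by linarith
    have hE : Real.exp (-(a₁ * (r / (2 * t * (r - t)))))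
          * Real.exp (-(a₂ * (s / (2 * t * (s - t)))))
        ≤ Real.exp (-(a₂ * (r / (2 * t * (r - t)))))
          * Real.exp (-(a₁ * (s / (2 * t * (s - t))))) := by
      rw [← Real.exp_add, ← Real.exp_add]
      apply Real.exp_le_exp.mpr
      nlinarith [mul_nonneg (sub_nonneg.mpr h12) (sub_nonneg.mpr hqle)]
    nlinarith [mul_le_mul_of_nonneg_left hE (mul_nonneg Br0 Bs0)]

/-- Core monotonicity of the ratio in the parameter `a`. -/
lemma core_mono (T : ℝ) (μ : Measure ℝ) [IsFiniteMeasure μ]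
    (t : ℝ) (ht : 0 < t) (htT : t < T) (hpos : 0 < μ (Set.Ioc t T))
    {a₁ a₂ : ℝ} (ha₁ : 0 < a₁) (h12 : a₁ ≤ a₂) :
    (∫ r in Set.Ioc t T, Gfun t a₂ r ∂μ) / (∫ r in Set.Ioc t T, Wfun t a₂ r ∂μ)
      ≤ (∫ r in Set.Ioc t T, Gfun t a₁ r ∂μ)
          / (∫ r in Set.Ioc t T, Wfun t a₁ r ∂μ) := by
  have ha₂ : 0 < a₂ := lt_of_lt_of_le ha₁ h12
  set ν := μ.restrict (Set.Ioc t T) with hν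
  have intW : ∀ a : ℝ, 0 < a → Integrable (Wfun t a) ν := by
    intro a ha
    refine Integrable.mono' (integrable_const (Real.sqrt T * (1 + (a / 2)⁻¹)))
      (measurable_Wfun t a).aestronglyMeasurable ?_
    rw [hν]
    filter_upwards [ae_restrict_mem measurableSet_Ioc] with r hrS
    rw [Real.norm_eq_abs, abs_of_nonneg (Wfun_nonneg t a r)]
    exact Wfun_bound ht hrS ha
  have intG : ∀ a : ℝ, 0 < a → Integrable (Gfun t a) ν := by
    intro a ha
    refine Integrable.mono'
      (integrable_const (Real.sqrt T * ((a / 2)⁻¹ + (a / 4)⁻¹ * (a / 4)⁻¹)))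
      (measurable_Gfun t a).aestronglyMeasurable ?_
    rw [hν]
    filter_upwards [ae_restrict_mem measurableSet_Ioc] with r hrS
    have hu : 0 < r - t := sub_pos.mpr hrS.1
    have hGnn : 0 ≤ Gfun t a r := by
      unfold Gfun
      exact mul_nonneg (inv_nonneg.mpr hu.le) (Wfun_nonneg t a r)
    rw [Real.norm_eq_abs, abs_of_nonneg hGnn]
    exact Gfun_bound ht hrS ha
  have Dpos : ∀ a : ℝ, 0 < a → 0 < ∫ r, Wfun t a r ∂ν := by
    intro a ha
    rw [integral_pos_iff_support_of_nonneg_ae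
      (Filter.Eventually.of_forall (Wfun_nonneg t a)) (intW a ha)]
    have hsub : Set.Ioc t T ⊆ Function.support (Wfun t a) := by
      intro r hrS
      have hu : 0 < r - t := sub_pos.mpr hrS.1
      have hrpos : 0 < r := ht.trans hrS.1
      exact (mul_pos (Real.sqrt_pos.mpr (div_pos hrpos hu)) (Real.exp_pos _)).ne'
    calc (0:ENNReal) < μ (Set.Ioc t T) := hpos
      _ = μ (Function.support (Wfun t a) ∩ Set.Ioc t T) := by
          rw [Set.inter_eq_self_of_subset_right hsub]
      _ = ν (Function.support (Wfun t a)) := by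
          rw [hν, Measure.restrict_apply' measurableSet_Ioc]
  rw [div_le_div_iff₀ (Dpos a₂ ha₂) (Dpos a₁ ha₁)]
  -- the four product integrands
  have h1 : Integrable (fun z : ℝ × ℝ => Gfun t a₂ z.1 * Wfun t a₁ z.2) (ν.prod ν) :=
    (intG a₂ ha₂).mul_prod (intW a₁ ha₁)
  have h2 : Integrable (fun z : ℝ × ℝ => Gfun t a₁ z.1 * Wfun t a₂ z.2) (ν.prod ν) :=
    (intG a₁ ha₁).mul_prod (intW a₂ ha₂)
  have h3 : Integrable (fun z : ℝ × ℝ => Wfun t a₁ z.1 * Gfun t a₂ z.2) (ν.prod ν) :=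
    (intW a₁ ha₁).mul_prod (intG a₂ ha₂)
  have h4 : Integrable (fun z : ℝ × ℝ => Wfun t a₂ z.1 * Gfun t a₁ z.2) (ν.prod ν) :=
    (intW a₂ ha₂).mul_prod (intG a₁ ha₁)
  have hle : ∫ z : ℝ × ℝ, (Gfun t a₂ z.1 * Wfun t a₁ z.2
      - Gfun t a₁ z.1 * Wfun t a₂ z.2 + Wfun t a₁ z.1 * Gfun t a₂ z.2
      - Wfun t a₂ z.1 * Gfun t a₁ z.2) ∂(ν.prod ν) ≤ 0 := by
    apply integral_nonpos_of_ae
    rw [hν, Measure.prod_restrict]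
    filter_upwards [ae_restrict_mem (measurableSet_Ioc.prod measurableSet_Ioc)] with z hz
    exact pointwise_sign ht h12 hz.1 hz.2
  have hi12 : Integrable (fun z : ℝ × ℝ => Gfun t a₂ z.1 * Wfun t a₁ z.2
      - Gfun t a₁ z.1 * Wfun t a₂ z.2) (ν.prod ν) := h1.sub h2
  have hi123 : Integrable (fun z : ℝ × ℝ => Gfun t a₂ z.1 * Wfun t a₁ z.2
      - Gfun t a₁ z.1 * Wfun t a₂ z.2 + Wfun t a₁ z.1 * Gfun t a₂ z.2) (ν.prod ν) :=
    hi12.add h3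
  rw [integral_sub hi123 h4, integral_add hi12 h3, integral_sub h1 h2,
    integral_prod_mul, integral_prod_mul, integral_prod_mul,
    integral_prod_mul] at hle
  linarith

theorem conditional_pinning_rate_monotone
    (T : ℝ) (hT : 0 < T) (μ : Measure ℝ) [IsFiniteMeasure μ]
    (hsupp : μ (Set.Icc (0:ℝ) T)ᶜ = 0)
    (t : ℝ) (ht : 0 < t) (htT : t < T) (hpos : 0 < μ (Set.Ioc t T))
    (f : ℝ → ℝ)
    (hf : ∀ x : ℝ, x ≠ 0 → f x =
      (∫ r in Set.Ioc t T,
          (r - t)⁻¹ * Real.sqrt (r / (r - t)) *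
            Real.exp (-(r * x ^ 2) / (2 * t * (r - t))) ∂μ) /
      (∫ r in Set.Ioc t T,
          Real.sqrt (r / (r - t)) *
            Real.exp (-(r * x ^ 2) / (2 * t * (r - t))) ∂μ)) :
    (∀ x₁ x₂ : ℝ, 0 < x₁ → x₁ < x₂ → f x₂ ≤ f x₁) ∧
    (∀ x₁ x₂ : ℝ, x₁ < x₂ → x₂ < 0 → f x₁ ≤ f x₂) := by
  have hG : ∀ a : ℝ, (∫ r in Set.Ioc t T, (r - t)⁻¹ * Real.sqrt (r / (r - t)) *
      Real.exp (-(r * a) / (2 * t * (r - t))) ∂μ)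
      = ∫ r in Set.Ioc t T, Gfun t a r ∂μ :=
    fun a => integral_congr_ae (Filter.Eventually.of_forall fun r => by
      unfold Gfun Wfun; ring)
  have hW : ∀ a : ℝ, (∫ r in Set.Ioc t T, Real.sqrt (r / (r - t)) *
      Real.exp (-(r * a) / (2 * t * (r - t))) ∂μ)
      = ∫ r in Set.Ioc t T, Wfun t a r ∂μ :=
    fun a => integral_congr_ae (Filter.Eventually.of_forall fun r => by
      unfold Wfun; ring)
  constructor
  · intro x₁ x₂ hx₁ hlt
    have hx₂ : 0 < x₂ := hx₁.trans hlt
    rw [hf x₁ hx₁.ne', hf x₂ hx₂.ne', hG, hG, hW, hW]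
    exact core_mono T μ t ht htT hpos (pow_pos hx₁ 2) (by nlinarith)
  · intro x₁ x₂ hlt hx₂
    have hx₁ : x₁ < 0 := hlt.trans hx₂
    rw [hf x₁ hx₁.ne, hf x₂ hx₂.ne, hG, hG, hW, hW]
    exact core_mono T μ t ht htT hpos
      (by nlinarith [mul_pos (neg_pos.mpr hx₂) (neg_pos.mpr hx₂)]) (by nlinarith)
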